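/- arXiv:2012.07235 — 7 statements merged into one kernel-verified Lean document; each statement's English description precedes it below -/
import Mathlib

section
/- Let N be a finite set, b0 > 0 a real, and for each i in N let a_i ≥ 0 and b_i > 0. Define h(S) = (Σ_{i∈S} a_i)/(b0 + Σ_{i∈S} b_i) for S ⊆ N. Then for any S ⊆ N and distinct i, j ∉ S, the submodularity inequality h(S∪{i,j}) - h(S∪{j}) ≤ h(S∪{i}) - h(S) holds if and only if h(S∪{i}) + h(S∪{j}) ≤ a_i/b_i + a_j/b_j. -/
/-!
Write `A/B` for `h S` and `rᵢ = aᵢ/bᵢ`. Adding `i` to a set forms a mediant, and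
`(A + aᵢ)/(B + bᵢ) - A/B = (bᵢ/B) (rᵢ - (A + aᵢ)/(B + bᵢ))`. Clearing the denominator
`B + bᵢ + bⱼ` turns submodularity into `0 ≤ bⱼ (h(S+i) - h S) + bᵢ (h(S+j) - h S)`, which by the
mediant identity is `bᵢ bⱼ / B` times `rᵢ + rⱼ - h(S+i) - h(S+j)`.
-/

lemma mediant_sub_div {A B a b : ℝ} (hB : B ≠ 0) (hb : b ≠ 0) (hBb : B + b ≠ 0) :
    (A + a) / (B + b) - A / B = b / B * (a / b - (A + a) / (B + b)) := by
  field_simp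
  ring

lemma sub_le_sub_iff_of_mul_eq {x xi xj xij B bi bj : ℝ} (hD : 0 < B + bi + bj)
    (hxij : xij * (B + bi + bj) = xi * (B + bi) + xj * (B + bj) - x * B) :
    xij - xj ≤ xi - x ↔ 0 ≤ bj * (xi - x) + bi * (xj - x) := by
  rw [sub_le_sub_iff, ← mul_le_mul_iff_of_pos_right hD]
  constructor <;> intro <;> linarith

lemma mediant_submodular_iff {A B ai aj bi bj : ℝ} (hB : 0 < B) (hbi : 0 < bi) (hbj : 0 < bj) :
    (A + ai + aj) / (B + bi + bj) - (A + aj) / (B + bj) ≤ (A + ai) / (B + bi) - A / B ↔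
      (A + ai) / (B + bi) + (A + aj) / (B + bj) ≤ ai / bi + aj / bj := by
  have hxij : (A + ai + aj) / (B + bi + bj) * (B + bi + bj) =
      (A + ai) / (B + bi) * (B + bi) + (A + aj) / (B + bj) * (B + bj) - A / B * B := by
    simp only [div_mul_cancel₀ _ (by positivity : B + bi + bj ≠ 0),
      div_mul_cancel₀ _ (by positivity : B + bi ≠ 0), div_mul_cancel₀ _ (by positivity : B + bj ≠ 0),
      div_mul_cancel₀ _ hB.ne']
    ring
  rw [sub_le_sub_iff_of_mul_eq (by positivity) hxij,
    mediant_sub_div hB.ne' hbi.ne' (by positivity), mediant_sub_div hB.ne' hbj.ne' (by positivity)]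
  have hfactor : bj * (bi / B * (ai / bi - (A + ai) / (B + bi))) +
      bi * (bj / B * (aj / bj - (A + aj) / (B + bj))) =
      bi * bj / B * (ai / bi + aj / bj - ((A + ai) / (B + bi) + (A + aj) / (B + bj))) := by
    ring
  rw [hfactor, mul_nonneg_iff_of_pos_left (by positivity), sub_nonneg]

theorem stmt_0_general {ι : Type*} [DecidableEq ι] (N : Finset ι) (a b : ι → ℝ) (b0 : ℝ)
    (hb0 : 0 < b0) (hb : ∀ i ∈ N, 0 < b i)
    (h : Finset ι → ℝ)
    (hdef : ∀ S : Finset ι, h S = (∑ i ∈ S, a i) / (b0 + ∑ i ∈ S, b i))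
    (S : Finset ι) (hSN : S ⊆ N) (i j : ι) (hi : i ∈ N) (hj : j ∈ N)
    (hiS : i ∉ S) (hjS : j ∉ S) (hij : i ≠ j) :
    h (insert i (insert j S)) - h (insert j S) ≤ h (insert i S) - h S ↔
      h (insert i S) + h (insert j S) ≤ a i / b i + a j / b j := by
  have hiJS : i ∉ insert j S := by simp [hij, hiS]
  have hB : 0 < b0 + ∑ k ∈ S, b k :=
    add_pos_of_pos_of_nonneg hb0 (Finset.sum_nonneg fun k hk => (hb k (hSN hk)).le)
  simp only [hdef, Finset.sum_insert hiS, Finset.sum_insert hjS, Finset.sum_insert hiJS]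
  convert mediant_submodular_iff (A := ∑ k ∈ S, a k) (ai := a i) (aj := a j) hB (hb i hi) (hb j hj)
    using 3 <;> ring

theorem stmt_0 {ι : Type*} [DecidableEq ι] (N : Finset ι) (a b : ι → ℝ) (b0 : ℝ)
    (hb0 : 0 < b0) (ha : ∀ i ∈ N, 0 ≤ a i) (hb : ∀ i ∈ N, 0 < b i)
    (h : Finset ι → ℝ)
    (hdef : ∀ S : Finset ι, h S = (∑ i ∈ S, a i) / (b0 + ∑ i ∈ S, b i))
    (S : Finset ι) (hSN : S ⊆ N) (i j : ι) (hi : i ∈ N) (hj : j ∈ N)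
    (hiS : i ∉ S) (hjS : j ∉ S) (hij : i ≠ j) :
    h (insert i (insert j S)) - h (insert j S) ≤ h (insert i S) - h S ↔
      h (insert i S) + h (insert j S) ≤ a i / b i + a j / b j :=
  stmt_0_general N a b b0 hb0 hb h hdef S hSN i j hi hj hiS hjS hij
end

section
/- Let h(S) = (Σ_{i∈S} a_i)/(b0 + Σ_{i∈S} b_i) with b0 > 0, a_i ≥ 0, b_i > 0. If h is monotone nondecreasing (i.e., h(S) ≤ h(S∪{j}) for all S and j ∉ S), then h is submodular: h(S∪{i,j}) - h(S∪{j}) ≤ h(S∪{i}) - h(S) for all S and distinct i,j ∉ S. -/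
theorem ratio_submodular_of_monotone {A B ai bi aj bj : ℝ} (hB : 0 < B) (hbi : 0 < bi)
    (hbj : 0 < bj) (hi : A / B ≤ (A + ai) / (B + bi)) (hj : A / B ≤ (A + aj) / (B + bj)) :
    (A + aj + ai) / (B + bj + bi) - (A + aj) / (B + bj) ≤ (A + ai) / (B + bi) - A / B := by
  rw [div_le_div_iff₀ hB (by positivity)] at hi hj
  rw [div_sub_div _ _ (by positivity) (by positivity), div_sub_div _ _ (by positivity) hB.ne',
    div_le_div_iff₀ (by positivity) (by positivity)]
  nlinarith [mul_le_mul_of_nonneg_right hi (by positivity : 0 ≤ bj * (B + bj)),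
    mul_le_mul_of_nonneg_right hj (by positivity : 0 ≤ bi * (B + bi))]

theorem stmt_1_general {ι : Type*} [DecidableEq ι] (N : Finset ι) (a b : ι → ℝ) (b0 : ℝ)
    (hb0 : 0 < b0) (hb : ∀ i ∈ N, 0 < b i)
    (h : Finset ι → ℝ)
    (hdef : ∀ S : Finset ι, h S = (∑ i ∈ S, a i) / (b0 + ∑ i ∈ S, b i))
    (hmono : ∀ S : Finset ι, S ⊆ N → ∀ j ∈ N, j ∉ S → h S ≤ h (insert j S)) :
    ∀ S : Finset ι, S ⊆ N → ∀ i ∈ N, ∀ j ∈ N, i ∉ S → j ∉ S → i ≠ j →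
      h (insert i (insert j S)) - h (insert j S) ≤ h (insert i S) - h S := by
  intro S hS i hi j hj hiS hjS hij
  set A := ∑ k ∈ S, a k
  set B := b0 + ∑ k ∈ S, b k
  have hB : 0 < B := add_pos_of_pos_of_nonneg hb0 (Finset.sum_nonneg fun k hk => (hb k (hS hk)).le)
  have hS0 : h S = A / B := hdef S
  have hSi : h (insert i S) = (A + a i) / (B + b i) := by
    rw [hdef, Finset.sum_insert hiS, Finset.sum_insert hiS]; ring
  have hSj : h (insert j S) = (A + a j) / (B + b j) := by
    rw [hdef, Finset.sum_insert hjS, Finset.sum_insert hjS]; ring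
  have hSij : h (insert i (insert j S)) = (A + a j + a i) / (B + b j + b i) := by
    have hijS : i ∉ insert j S := by simp [hij, hiS]
    rw [hdef, Finset.sum_insert hijS, Finset.sum_insert hijS, Finset.sum_insert hjS,
      Finset.sum_insert hjS]; ring
  have hmi := hmono S hS i hi hiS
  have hmj := hmono S hS j hj hjS
  rw [hS0, hSi] at hmi
  rw [hS0, hSj] at hmj
  rw [hS0, hSi, hSj, hSij]
  exact ratio_submodular_of_monotone hB (hb i hi) (hb j hj) hmi hmj

theorem stmt_1 {ι : Type*} [DecidableEq ι] (N : Finset ι) (a b : ι → ℝ) (b0 : ℝ)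
    (hb0 : 0 < b0) (ha : ∀ i ∈ N, 0 ≤ a i) (hb : ∀ i ∈ N, 0 < b i)
    (h : Finset ι → ℝ)
    (hdef : ∀ S : Finset ι, h S = (∑ i ∈ S, a i) / (b0 + ∑ i ∈ S, b i))
    (hmono : ∀ S : Finset ι, S ⊆ N → ∀ j ∈ N, j ∉ S → h S ≤ h (insert j S)) :
    ∀ S : Finset ι, S ⊆ N → ∀ i ∈ N, ∀ j ∈ N, i ∉ S → j ∉ S → i ≠ j →
      h (insert i (insert j S)) - h (insert j S) ≤ h (insert i S) - h S :=
  stmt_1_general N a b b0 hb0 hb h hdef hmono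
end

section
/- Let h(S) = (Σ_{i∈S} a_i)/(b0 + Σ_{i∈S} b_i) with b0 > 0, a_i ≥ 0, b_i > 0. Then h is monotone nondecreasing over all subsets of N (h(S) ≤ h(T) whenever S ⊆ T ⊆ N) if and only if min_{i∈N} (a_i/b_i) ≥ h(N). -/
/-!
`h(T)` is the mediant of `h(S)` and `(Σ_{T \ S} a) / (Σ_{T \ S} b)`, so it lies between them.
Taking `S = N \ {i}`, `T = N`, monotonicity forces `h(N) ≤ a_i / b_i`. Conversely, if
`r = min a_i / b_i ≥ h(N)`, then every `h(S)` with `S ⊆ N` is at most `r` (remove `N \ S`,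
whose ratio is at least `r`, from `N`), and adding to `S` a block of ratio at least `r ≥ h(S)`
can only increase `h`.
-/

open Finset

section Mediant

variable {K : Type*} [Field K] [LinearOrder K] [IsStrictOrderedRing K] {p q r s c : K}

theorem div_le_add_div_add (hq : 0 < q) (hs : 0 ≤ s) (hpc : p / q ≤ c) (hcr : c * s ≤ r) :
    p / q ≤ (p + r) / (q + s) := by
  rw [div_le_iff₀ hq] at hpc
  rw [div_le_div_iff₀ hq (add_pos_of_pos_of_nonneg hq hs)]
  nlinarith [mul_le_mul_of_nonneg_right hpc hs, mul_le_mul_of_nonneg_right hcr hq.le]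

theorem div_le_of_add_div_add_le (hq : 0 < q) (hs : 0 ≤ s) (h : (p + r) / (q + s) ≤ c)
    (hcr : c * s ≤ r) : p / q ≤ c := by
  rw [div_le_iff₀ (add_pos_of_pos_of_nonneg hq hs)] at h
  rw [div_le_iff₀ hq]
  linarith

theorem add_div_add_le_div_of_div_le (hq : 0 < q) (hs : 0 < s)
    (h : p / q ≤ (p + r) / (q + s)) : (p + r) / (q + s) ≤ r / s := by
  rw [div_le_div_iff₀ hq (add_pos hq hs)] at h
  rw [div_le_div_iff₀ (add_pos hq hs) hs]
  linarith

end Mediant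

section SumRatio

variable {ι K : Type*} [DecidableEq ι] [Field K] [LinearOrder K] [IsStrictOrderedRing K]
  (a b : ι → K) (b0 : K) {N S T : Finset ι} {c : K}

def sumRatio (S : Finset ι) : K := (∑ i ∈ S, a i) / (b0 + ∑ i ∈ S, b i)

omit [DecidableEq ι] in
theorem add_sum_pos {b0 : K} (hb0 : 0 < b0) (hb : ∀ i ∈ S, 0 < b i) :
    0 < b0 + ∑ i ∈ S, b i :=
  add_pos_of_pos_of_nonneg hb0 (sum_nonneg fun i hi => (hb i hi).le)

omit [LinearOrder K] [IsStrictOrderedRing K] in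
theorem sumRatio_eq_of_subset (hST : S ⊆ T) :
    sumRatio a b b0 T =
      (∑ i ∈ S, a i + ∑ i ∈ T \ S, a i) / ((b0 + ∑ i ∈ S, b i) + ∑ i ∈ T \ S, b i) := by
  rw [sumRatio, ← sum_sdiff hST, ← sum_sdiff hST (f := b)]
  congr 1 <;> ring

omit [DecidableEq ι] in
theorem mul_sum_le_sum (hc : ∀ i ∈ S, c * b i ≤ a i) : c * ∑ i ∈ S, b i ≤ ∑ i ∈ S, a i := by
  rw [mul_sum]
  exact sum_le_sum hc

variable {a b b0}

theorem sumRatio_le_of_subset (hb0 : 0 < b0) (hb : ∀ i ∈ N, 0 < b i) (hSN : S ⊆ N)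
    (hN : sumRatio a b b0 N ≤ c) (hc : ∀ i ∈ N, c * b i ≤ a i) : sumRatio a b b0 S ≤ c := by
  rw [sumRatio_eq_of_subset a b b0 hSN] at hN
  exact div_le_of_add_div_add_le (add_sum_pos b hb0 fun i hi => hb i (hSN hi))
    (sum_nonneg fun i hi => (hb i (sdiff_subset hi)).le) hN
    (mul_sum_le_sum a b fun i hi => hc i (sdiff_subset hi))

theorem sumRatio_le_sumRatio (hb0 : 0 < b0) (hb : ∀ i ∈ T, 0 < b i) (hST : S ⊆ T)
    (hS : sumRatio a b b0 S ≤ c) (hc : ∀ i ∈ T, c * b i ≤ a i) :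
    sumRatio a b b0 S ≤ sumRatio a b b0 T := by
  rw [sumRatio_eq_of_subset a b b0 hST]
  exact div_le_add_div_add (add_sum_pos b hb0 fun i hi => hb i (hST hi))
    (sum_nonneg fun i hi => (hb i (sdiff_subset hi)).le) hS
    (mul_sum_le_sum a b fun i hi => hc i (sdiff_subset hi))

theorem sumRatio_le_div_of_erase_le (hb0 : 0 < b0) (hb : ∀ i ∈ N, 0 < b i) {i : ι} (hi : i ∈ N)
    (h : sumRatio a b b0 (N.erase i) ≤ sumRatio a b b0 N) : sumRatio a b b0 N ≤ a i / b i := by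
  rw [sumRatio_eq_of_subset a b b0 (erase_subset i N), sdiff_erase_self hi, sum_singleton,
    sum_singleton] at h ⊢
  exact add_div_add_le_div_of_div_le
    (add_sum_pos b hb0 fun j hj => hb j (mem_of_mem_erase hj)) (hb i hi) h

end SumRatio

theorem stmt_3_general {ι : Type*} [DecidableEq ι] (N : Finset ι) (hN : N.Nonempty)
    (a b : ι → ℝ) (b0 : ℝ)
    (hb0 : 0 < b0) (hb : ∀ i ∈ N, 0 < b i)
    (h : Finset ι → ℝ)
    (hdef : ∀ S : Finset ι, h S = (∑ i ∈ S, a i) / (b0 + ∑ i ∈ S, b i)) :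
    (∀ S T : Finset ι, S ⊆ T → T ⊆ N → h S ≤ h T) ↔
      h N ≤ N.inf' hN (fun i => a i / b i) := by
  obtain rfl : h = sumRatio a b b0 := funext hdef
  set r := N.inf' hN (fun i => a i / b i)
  have hr : ∀ i ∈ N, r * b i ≤ a i := fun i hi =>
    (le_div_iff₀ (hb i hi)).mp (inf'_le (fun i => a i / b i) hi)
  constructor
  · intro hmono
    exact le_inf' hN _ fun i hi =>
      sumRatio_le_div_of_erase_le hb0 hb hi (hmono _ _ (erase_subset i N) subset_rfl)
  · intro hNr S T hST hTN
    exact sumRatio_le_sumRatio hb0 (fun i hi => hb i (hTN hi)) hST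
      (sumRatio_le_of_subset hb0 hb (hST.trans hTN) hNr hr) fun i hi => hr i (hTN hi)

theorem stmt_3 {ι : Type*} [DecidableEq ι] (N : Finset ι) (hN : N.Nonempty)
    (a b : ι → ℝ) (b0 : ℝ)
    (hb0 : 0 < b0) (ha : ∀ i ∈ N, 0 ≤ a i) (hb : ∀ i ∈ N, 0 < b i)
    (h : Finset ι → ℝ)
    (hdef : ∀ S : Finset ι, h S = (∑ i ∈ S, a i) / (b0 + ∑ i ∈ S, b i)) :
    (∀ S T : Finset ι, S ⊆ T → T ⊆ N → h S ≤ h T) ↔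
      h N ≤ N.inf' hN (fun i => a i / b i) :=
  stmt_3_general N hN a b b0 hb0 hb h hdef
end

section
/- Let h(S) = (Σ_{i∈S} a_i)/(b0 + Σ_{i∈S} b_i) with b0 > 0, a_i ≥ 0, b_i > 0, and suppose h is submodular over all subsets of N. Let n ∈ N minimize a_i/b_i. Then for every S ⊆ N with n ∉ S and every j ∉ S with j ≠ n, we have h(S) ≤ h(S∪{j}). -/
/-!
Adding an item `(x, y)` to a ratio `A / B` changes it by `y * (x / y - A / B) / (B + y)`.
If `h (S ∪ {j}) < h S`, then by the mediant property `a j / b j < h (S ∪ {j}) < h S`, so the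
ratio `a n / b n ≤ a j / b j` lies below both values. Adding `n` to `S ∪ {j}` then loses strictly
less than adding it to `S`: the deficit is smaller and the denominator larger. This contradicts
submodularity.
-/

theorem add_div_add_sub_div {A B x y : ℝ} (hB : B ≠ 0) (hy : y ≠ 0) (hBy : B + y ≠ 0) :
    (A + x) / (B + y) - A / B = y * (x / y - A / B) / (B + y) := by
  field_simp
  ring

theorem div_lt_add_div_add_of_div_lt {A B c d : ℝ} (hB : 0 < B) (hd : 0 < d)
    (h : c / d < A / B) : c / d < (A + c) / (B + d) := by
  have hgain := add_div_add_sub_div (A := c) (x := A) hd.ne' hB.ne' (by positivity : d + B ≠ 0)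
  rw [add_comm c, add_comm d] at hgain
  have : 0 < B * (A / B - c / d) / (B + d) := by
    have := sub_pos.2 h
    positivity
  linarith

theorem div_lt_div_of_add_div_add_lt {A B c d : ℝ} (hB : 0 < B) (hd : 0 < d)
    (h : (A + c) / (B + d) < A / B) : c / d < A / B := by
  have hgain := add_div_add_sub_div (A := A) (x := c) hB.ne' hd.ne' (by positivity : B + d ≠ 0)
  by_contra! hle
  have : 0 ≤ d * (c / d - A / B) / (B + d) := by
    have := sub_nonneg.2 hle
    positivity
  linarith

theorem div_le_add_div_add_of_submodular {A B c d x y : ℝ} (hB : 0 < B) (hd : 0 < d) (hy : 0 < y)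
    (hsub : (A + c + x) / (B + d + y) - (A + c) / (B + d) ≤ (A + x) / (B + y) - A / B)
    (hxy : x / y ≤ c / d) : A / B ≤ (A + c) / (B + d) := by
  by_contra! hlt
  have hmed := div_lt_add_div_add_of_div_lt hB hd (div_lt_div_of_add_div_add_lt hB hd hlt)
  rw [add_div_add_sub_div (by positivity) hy.ne' (by positivity),
    add_div_add_sub_div hB.ne' hy.ne' (by positivity)] at hsub
  have hgain_neg : 0 ≤ -(y * (x / y - (A + c) / (B + d))) := by
    have : x / y - (A + c) / (B + d) < 0 := by linarith
    exact neg_nonneg.2 (mul_neg_of_pos_of_neg hy this).le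
  have : y * (x / y - A / B) / (B + y) < y * (x / y - (A + c) / (B + d)) / (B + d + y) := by
    have hden := div_le_div_of_nonneg_left hgain_neg (by positivity) (by linarith : B + y ≤ B + d + y)
    rw [neg_div, neg_div] at hden
    calc y * (x / y - A / B) / (B + y) < y * (x / y - (A + c) / (B + d)) / (B + y) := by
          gcongr
      _ ≤ _ := by linarith
  linarith

theorem stmt_7_general {ι : Type*} [DecidableEq ι] (N : Finset ι) (a b : ι → ℝ) (b0 : ℝ)
    (hb0 : 0 < b0) (hb : ∀ i ∈ N, 0 < b i)
    (h : Finset ι → ℝ)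
    (hdef : ∀ S : Finset ι, h S = (∑ i ∈ S, a i) / (b0 + ∑ i ∈ S, b i))
    (hsub : ∀ S : Finset ι, S ⊆ N → ∀ i ∈ N, ∀ j ∈ N, i ∉ S → j ∉ S → i ≠ j →
      h (insert i (insert j S)) - h (insert j S) ≤ h (insert i S) - h S)
    (n : ι) (hn : n ∈ N) (hnmin : ∀ i ∈ N, a n / b n ≤ a i / b i) :
    ∀ S : Finset ι, S ⊆ N → n ∉ S → ∀ j ∈ N, j ∉ S → j ≠ n →
      h S ≤ h (insert j S) := by
  intro S hS hnS j hjN hjS hjn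
  have hsubS := hsub S hS n hn j hjN hnS hjS (Ne.symm hjn)
  have hnjS : n ∉ insert j S := by simp [hnS, Ne.symm hjn]
  simp only [hdef, Finset.sum_insert hnjS, Finset.sum_insert hjS, Finset.sum_insert hnS] at hsubS ⊢
  have hB : 0 < b0 + ∑ i ∈ S, b i :=
    add_pos_of_pos_of_nonneg hb0 (Finset.sum_nonneg fun i hi => (hb i (hS hi)).le)
  convert div_le_add_div_add_of_submodular hB (hb j hjN) (hb n hn) (by convert hsubS using 3 <;> ring)
    (hnmin j hjN) using 2 <;> ring

theorem stmt_7 {ι : Type*} [DecidableEq ι] (N : Finset ι) (a b : ι → ℝ) (b0 : ℝ)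
    (hb0 : 0 < b0) (ha : ∀ i ∈ N, 0 ≤ a i) (hb : ∀ i ∈ N, 0 < b i)
    (h : Finset ι → ℝ)
    (hdef : ∀ S : Finset ι, h S = (∑ i ∈ S, a i) / (b0 + ∑ i ∈ S, b i))
    (hsub : ∀ S : Finset ι, S ⊆ N → ∀ i ∈ N, ∀ j ∈ N, i ∉ S → j ∉ S → i ≠ j →
      h (insert i (insert j S)) - h (insert j S) ≤ h (insert i S) - h S)
    (n : ι) (hn : n ∈ N) (hnmin : ∀ i ∈ N, a n / b n ≤ a i / b i) :
    ∀ S : Finset ι, S ⊆ N → n ∉ S → ∀ j ∈ N, j ∉ S → j ≠ n →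
      h S ≤ h (insert j S) :=
  stmt_7_general N a b b0 hb0 hb h hdef hsub n hn hnmin
end

section
/- Let N be a finite set, p a positive integer, and for a fixed customer segment k let utilities v_i > 0 and weights w_i > 0 for i ∈ N. Fix δ ∈ (0,1) and set v_min = δ · min_{i∈N} v_i. Define g(S) = (Σ_{i∈S} v_i w_i)/(p·v_min + Σ_{i∈S}(v_i − v_min)) for S ⊆ N. If w_min/w_max + 1 ≥ v_max/v_min (where w_min, w_max, v_max are the min/max weights and max utility), then g(S) ≤ (v_i w_i)/(v_i − v_min) for all S ⊆ N with |S| ≤ p and all i ∈ N; i.e., g is monotone nondecreasing over sets of cardinality at most p. -/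
/-!
The spread condition `w_min / w_max + 1 ≥ v_max / v_min` says
`w_max (v_max - v_min) ≤ w_min v_min`, so every weight `w_j` is at most every ratio
`r_i = v_i w_i / (v_i - v_min)`. Writing the denominator of `g(S)` as
`Σ_{j∈S} v_j + (p - |S|) v_min`, the numerator `Σ_{j∈S} v_j w_j` is then at most
`r_i` times the denominator whenever `|S| ≤ p`. Monotonicity follows because
`g(S ∪ {j})` is the mediant of `g(S)` and `r_j ≥ g(S)`.
-/

open Finset

theorem div_le_add_div_add_s13 {a b c d : ℝ} (hb : 0 < b) (hd : 0 < d) (h : a / b ≤ c / d) :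
    a / b ≤ (a + c) / (b + d) := by
  rw [div_le_div_iff₀ hb hd] at h
  rw [div_le_div_iff₀ hb (add_pos hb hd)]
  linarith

section Ratio

variable {ι : Type*} {S : Finset ι} {v w : ι → ℝ} {c : ℝ} {p : ℕ}

theorem natCast_mul_add_sum_sub (S : Finset ι) (v : ι → ℝ) (c : ℝ) (p : ℕ) :
    (p : ℝ) * c + ∑ j ∈ S, (v j - c) = ∑ j ∈ S, v j + ((p : ℝ) - S.card) * c := by
  rw [sum_sub_distrib, sum_const, nsmul_eq_mul]
  ring

theorem natCast_mul_add_sum_sub_nonneg (hS : S.card ≤ p) (hc : 0 ≤ c)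
    (hv : ∀ j ∈ S, 0 ≤ v j) : 0 ≤ (p : ℝ) * c + ∑ j ∈ S, (v j - c) := by
  have hp : (S.card : ℝ) ≤ p := by exact_mod_cast hS
  rw [natCast_mul_add_sum_sub]
  exact add_nonneg (sum_nonneg hv) (mul_nonneg (sub_nonneg.mpr hp) hc)

theorem natCast_mul_add_sum_sub_pos (hS : S.card < p) (hc : 0 < c)
    (hv : ∀ j ∈ S, 0 ≤ v j) : 0 < (p : ℝ) * c + ∑ j ∈ S, (v j - c) := by
  have hp : (S.card : ℝ) < p := by exact_mod_cast hS
  rw [natCast_mul_add_sum_sub]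
  exact add_pos_of_nonneg_of_pos (sum_nonneg hv) (mul_pos (sub_pos.mpr hp) hc)

theorem sum_mul_div_natCast_mul_add_sum_sub_le {r : ℝ} (hS : S.card ≤ p) (hc : 0 ≤ c)
    (hr : 0 ≤ r) (hv : ∀ j ∈ S, 0 ≤ v j) (hw : ∀ j ∈ S, w j ≤ r) :
    (∑ j ∈ S, v j * w j) / ((p : ℝ) * c + ∑ j ∈ S, (v j - c)) ≤ r := by
  have hp : (S.card : ℝ) ≤ p := by exact_mod_cast hS
  refine div_le_of_le_mul₀ (natCast_mul_add_sum_sub_nonneg hS hc hv) hr ?_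
  calc ∑ j ∈ S, v j * w j
      ≤ ∑ j ∈ S, r * v j :=
        sum_le_sum fun j hj => by
          rw [mul_comm r]; exact mul_le_mul_of_nonneg_left (hw j hj) (hv j hj)
    _ = r * ∑ j ∈ S, v j := (mul_sum _ _ _).symm
    _ ≤ r * (∑ j ∈ S, v j + ((p : ℝ) - S.card) * c) :=
        mul_le_mul_of_nonneg_left (le_add_of_nonneg_right (mul_nonneg (sub_nonneg.mpr hp) hc)) hr
    _ = r * ((p : ℝ) * c + ∑ j ∈ S, (v j - c)) := by rw [natCast_mul_add_sum_sub]

end Ratio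

theorem le_mul_div_sub_of_inf'_div_sup'_add_one_ge {ι : Type*} {N : Finset ι}
    (hN : N.Nonempty) {v w : ι → ℝ} {m : ℝ} (hm : 0 < m) (hmv : ∀ i ∈ N, m < v i)
    (hw : ∀ i ∈ N, 0 < w i) (hcond : N.inf' hN w / N.sup' hN w + 1 ≥ N.sup' hN v / m)
    {i j : ι} (hi : i ∈ N) (hj : j ∈ N) :
    w j ≤ v i * w i / (v i - m) := by
  have hwmax : 0 < N.sup' hN w := (hw j hj).trans_le (le_sup' w hj)
  have hspread : N.sup' hN w * (N.sup' hN v - m) ≤ N.inf' hN w * m := by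
    rw [ge_iff_le, div_le_iff₀ hm, div_add_one hwmax.ne', div_mul_eq_mul_div,
      le_div_iff₀ hwmax] at hcond
    linarith
  rw [le_div_iff₀ (sub_pos.mpr (hmv i hi))]
  calc w j * (v i - m)
      ≤ N.sup' hN w * (N.sup' hN v - m) :=
        mul_le_mul (le_sup' w hj) (by linarith [le_sup' v hi]) (sub_pos.mpr (hmv i hi)).le
          hwmax.le
    _ ≤ N.inf' hN w * m := hspread
    _ ≤ w i * v i := mul_le_mul (inf'_le w hi) (hmv i hi).le hm.le (hw i hi).le
    _ = v i * w i := mul_comm _ _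

theorem stmt_13_general {ι : Type*} [DecidableEq ι] (N : Finset ι) (hN : N.Nonempty)
    (v w : ι → ℝ) (p : ℕ) (δ : ℝ) (hδ : δ ∈ Set.Ioo (0 : ℝ) 1)
    (hv : ∀ i ∈ N, 0 < v i) (hw : ∀ i ∈ N, 0 < w i)
    (vmin : ℝ) (hvmin : vmin = δ * N.inf' hN v)
    (g : Finset ι → ℝ)
    (hg : ∀ S : Finset ι,
      g S = (∑ i ∈ S, v i * w i) / ((p : ℝ) * vmin + ∑ i ∈ S, (v i - vmin)))
    (hcond : N.inf' hN w / N.sup' hN w + 1 ≥ N.sup' hN v / vmin) :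
    (∀ S : Finset ι, S ⊆ N → S.card ≤ p → ∀ i ∈ N,
        g S ≤ v i * w i / (v i - vmin)) ∧
      (∀ S : Finset ι, S ⊆ N → ∀ j ∈ N, j ∉ S → (insert j S).card ≤ p →
        g S ≤ g (insert j S)) := by
  have hinf : 0 < N.inf' hN v := (lt_inf'_iff hN).mpr hv
  have hvmin0 : 0 < vmin := hvmin ▸ mul_pos hδ.1 hinf
  have hvmin_lt : ∀ i ∈ N, vmin < v i := fun i hi =>
    hvmin ▸ (mul_lt_of_lt_one_left hinf hδ.2).trans_le (inf'_le v hi)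
  have hratio_pos : ∀ i ∈ N, 0 < v i - vmin := fun i hi => sub_pos.mpr (hvmin_lt i hi)
  have hbound : ∀ S : Finset ι, S ⊆ N → S.card ≤ p → ∀ i ∈ N,
      g S ≤ v i * w i / (v i - vmin) := fun S hS hcard i hi => by
    rw [hg]
    exact sum_mul_div_natCast_mul_add_sum_sub_le hcard hvmin0.le
      (div_pos (mul_pos (hv i hi) (hw i hi)) (hratio_pos i hi)).le
      (fun j hj => (hv j (hS hj)).le)
      fun j hj => le_mul_div_sub_of_inf'_div_sup'_add_one_ge hN hvmin0 hvmin_lt hw hcond hi (hS hj)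
  refine ⟨hbound, fun S hS j hj hjS hcard => ?_⟩
  rw [card_insert_of_notMem hjS] at hcard
  have hgj := hbound S hS (by omega) j hj
  rw [hg] at hgj ⊢
  rw [hg, sum_insert hjS, sum_insert hjS, add_left_comm, add_comm (v j - vmin), add_comm (v j * w j)]
  exact div_le_add_div_add_s13 (natCast_mul_add_sum_sub_pos (by omega) hvmin0
    fun k hk => (hv k (hS hk)).le) (hratio_pos j hj) hgj

theorem stmt_13 {ι : Type*} [DecidableEq ι] (N : Finset ι) (hN : N.Nonempty)
    (v w : ι → ℝ) (p : ℕ) (hp : 1 ≤ p) (δ : ℝ) (hδ : δ ∈ Set.Ioo (0 : ℝ) 1)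
    (hv : ∀ i ∈ N, 0 < v i) (hw : ∀ i ∈ N, 0 < w i)
    (vmin : ℝ) (hvmin : vmin = δ * N.inf' hN v)
    (g : Finset ι → ℝ)
    (hg : ∀ S : Finset ι,
      g S = (∑ i ∈ S, v i * w i) / ((p : ℝ) * vmin + ∑ i ∈ S, (v i - vmin)))
    (hcond : N.inf' hN w / N.sup' hN w + 1 ≥ N.sup' hN v / vmin) :
    (∀ S : Finset ι, S ⊆ N → S.card ≤ p → ∀ i ∈ N,
        g S ≤ v i * w i / (v i - vmin)) ∧
      (∀ S : Finset ι, S ⊆ N → ∀ j ∈ N, j ∉ S → (insert j S).card ≤ p →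
        g S ≤ g (insert j S)) :=
  stmt_13_general N hN v w p δ hδ hv hw vmin hvmin g hg hcond
end

section
/- Let h(S) = (Σ_{i∈S} a_i)/(b0 + Σ_{i∈S} b_i) with b0 > 0, a_i ≥ 0, b_i > 0, and suppose for every S ⊆ N and distinct i, j ∉ S the inequality h(S∪{i}) + h(S∪{j}) ≤ a_i/b_i + a_j/b_j holds. Then for every S ⊆ T ⊆ N and every i ∉ T: h(T∪{i}) − h(T) ≤ h(S∪{i}) − h(S) (the diminishing-returns form of submodularity). -/
/-!
Write `p`, `q`, `r` for the ratios `(A + x)/(B + u)`, `(A + y)/(B + v)`, `A/B` of a set with one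
element added, the other one added, and neither. Since `x = (B + u) p - B r`, the pairwise-exchange
bound `p + q ≤ x/u + y/v` says `v (p - r) + u (q - r) ≥ 0`, and since the ratio with both elements
added is the weighted mediant `((B + u) p + (B + v) q - B r)/(B + u + v)`, the same condition is
equivalent to the local submodular inequality `h(U ∪ {i, j}) + h(U) ≤ h(U ∪ {i}) + h(U ∪ {j})`.
The diminishing-returns form then follows by adding the elements of `T \ S` one at a time.
-/

open Finset

theorem add_div_add_add_div_le_of_le_div_add_div {A B x y u v : ℝ}
    (hB : 0 < B) (hu : 0 < u) (hv : 0 < v)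
    (h : (A + x) / (B + u) + (A + y) / (B + v) ≤ x / u + y / v) :
    (A + x + y) / (B + u + v) + A / B ≤ (A + x) / (B + u) + (A + y) / (B + v) := by
  have hBu : 0 < B + u := by linarith
  have hBv : 0 < B + v := by linarith
  rw [div_add_div _ _ hBu.ne' hBv.ne', div_add_div _ _ hu.ne' hv.ne',
    div_le_div_iff₀ (by positivity) (by positivity)] at h
  rw [div_add_div _ _ (by positivity) hB.ne', div_add_div _ _ hBu.ne' hBv.ne',
    div_le_div_iff₀ (by positivity) (by positivity)]
  nlinarith [h]

theorem sub_le_sub_of_exchange {ι β : Type*} [DecidableEq ι] [AddCommGroup β] [PartialOrder β]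
    [IsOrderedAddMonoid β] {N : Finset ι} {f : Finset ι → β}
    (hf : ∀ U ⊆ N, ∀ i ∈ N, ∀ j ∈ N, i ∉ U → j ∉ U → i ≠ j →
      f (insert j (insert i U)) + f U ≤ f (insert i U) + f (insert j U))
    {S T : Finset ι} (hST : S ⊆ T) (hTN : T ⊆ N) {i : ι} (hiN : i ∈ N) (hiT : i ∉ T) :
    f (insert i T) - f T ≤ f (insert i S) - f S := by
  obtain ⟨D, hSD, rfl⟩ : ∃ D, Disjoint S D ∧ T = S ∪ D :=
    ⟨T \ S, disjoint_sdiff, (union_sdiff_of_subset hST).symm⟩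
  clear hST
  induction D using Finset.induction_on with
  | empty => simp
  | insert j D hjD ih =>
    rw [union_insert] at hTN hiT ⊢
    have hjS : j ∉ S := disjoint_left.mp hSD.symm (mem_insert_self j D)
    have hj : j ∉ S ∪ D := by simp [hjS, hjD]
    have hi : i ∉ S ∪ D := fun hi => hiT (mem_insert_of_mem hi)
    have hUN : S ∪ D ⊆ N := (subset_insert j _).trans hTN
    have hstep : f (insert i (insert j (S ∪ D))) - f (insert j (S ∪ D)) ≤
        f (insert i (S ∪ D)) - f (S ∪ D) := by
      rw [insert_comm, sub_le_sub_iff]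
      exact hf _ hUN i hiN j (hTN (mem_insert_self j _)) hi hj
        (by rintro rfl; exact hiT (mem_insert_self i _))
    exact hstep.trans (ih (disjoint_insert_right.mp hSD).2 hUN hi)

theorem stmt_16_general {ι : Type*} [DecidableEq ι] (N : Finset ι) (a b : ι → ℝ) (b0 : ℝ)
    (hb0 : 0 < b0) (hb : ∀ i ∈ N, 0 < b i)
    (h : Finset ι → ℝ)
    (hdef : ∀ S : Finset ι, h S = (∑ i ∈ S, a i) / (b0 + ∑ i ∈ S, b i))
    (hcert : ∀ S : Finset ι, S ⊆ N → ∀ i ∈ N, ∀ j ∈ N, i ∉ S → j ∉ S → i ≠ j →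
      h (insert i S) + h (insert j S) ≤ a i / b i + a j / b j) :
    ∀ S T : Finset ι, S ⊆ T → T ⊆ N → ∀ i ∈ N, i ∉ T →
      h (insert i T) - h T ≤ h (insert i S) - h S := by
  intro S T hST hTN i hiN hiT
  refine sub_le_sub_of_exchange (fun U hUN i hiN j hjN hiU hjU hij => ?_) hST hTN hiN hiT
  have hjiU : j ∉ insert i U := by simp [hij.symm, hjU]
  have hB : 0 < b0 + ∑ k ∈ U, b k :=
    add_pos_of_pos_of_nonneg hb0 (sum_nonneg fun k hk => (hb k (hUN hk)).le)
  have hinsert : ∀ k ∉ U,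
      h (insert k U) = ((∑ k ∈ U, a k) + a k) / ((b0 + ∑ k ∈ U, b k) + b k) := by
    intro k hk
    rw [hdef, sum_insert hk, sum_insert hk]
    ring
  have hinsert₂ : h (insert j (insert i U)) =
      ((∑ k ∈ U, a k) + a i + a j) / ((b0 + ∑ k ∈ U, b k) + b i + b j) := by
    rw [hdef, sum_insert hjiU, sum_insert hjiU, sum_insert hiU, sum_insert hiU]
    ring
  have hcertU := hcert U hUN i hiN j hjN hiU hjU hij
  rw [hinsert i hiU, hinsert j hjU] at hcertU
  rw [hinsert i hiU, hinsert j hjU, hinsert₂, hdef]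
  exact add_div_add_add_div_le_of_le_div_add_div hB (hb i hiN) (hb j hjN) hcertU

theorem stmt_16 {ι : Type*} [DecidableEq ι] (N : Finset ι) (a b : ι → ℝ) (b0 : ℝ)
    (hb0 : 0 < b0) (ha : ∀ i ∈ N, 0 ≤ a i) (hb : ∀ i ∈ N, 0 < b i)
    (h : Finset ι → ℝ)
    (hdef : ∀ S : Finset ι, h S = (∑ i ∈ S, a i) / (b0 + ∑ i ∈ S, b i))
    (hcert : ∀ S : Finset ι, S ⊆ N → ∀ i ∈ N, ∀ j ∈ N, i ∉ S → j ∉ S → i ≠ j →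
      h (insert i S) + h (insert j S) ≤ a i / b i + a j / b j) :
    ∀ S T : Finset ι, S ⊆ T → T ⊆ N → ∀ i ∈ N, i ∉ T →
      h (insert i T) - h T ≤ h (insert i S) - h S :=
  stmt_16_general N a b b0 hb0 hb h hdef hcert
end

section
/- Let h(S) = (Σ_{i∈S} a_i)/(b0 + Σ_{i∈S} b_i) with b0 > 0, a_i ≥ 0, b_i > 0, and suppose min_{i∈N} a_i/b_i ≥ h(N). Then h is submodular over all subsets of N. -/
/-!
Put `x = h N`. The hypothesis says `a k ≥ x b k` for every `k ∈ N`, hence also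
`Σ_T a ≤ x (b0 + Σ_T b)` for every `T ⊆ N`, since equality holds at `T = N`. Writing
`A = Σ_T a`, `B = b0 + Σ_T b`, the marginal gain of `i` at `T` is
`(a i - x b i) / (B + b i) + (x B - A) b i / (B (B + b i))`, a sum of two nonnegative terms.
Adding `j` to `T` increases `B` and decreases the slack `x B - A ≥ 0`, so both terms shrink.
-/

open Finset

lemma add_div_add_sub_div_eq (x A B a b : ℝ) (hB : B ≠ 0) (hBb : B + b ≠ 0) :
    (A + a) / (B + b) - A / B = (a - x * b) / (B + b) + (x * B - A) * b / (B * (B + b)) := by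
  field_simp
  ring

lemma add_div_add_sub_div_antitone {x A B A' B' a b : ℝ} (hb : 0 < b) (hB : 0 < B)
    (hBB' : B ≤ B') (hab : x * b ≤ a) (hA' : A' ≤ x * B') (hslack : x * B' - A' ≤ x * B - A) :
    (A' + a) / (B' + b) - A' / B' ≤ (A + a) / (B + b) - A / B := by
  have hB' : 0 < B' := hB.trans_le hBB'
  rw [add_div_add_sub_div_eq x A B a b hB.ne' (by positivity),
    add_div_add_sub_div_eq x A' B' a b hB'.ne' (by positivity)]
  have hd : 0 ≤ a - x * b := sub_nonneg.mpr hab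
  have he' : 0 ≤ x * B' - A' := sub_nonneg.mpr hA'
  have he : 0 ≤ (x * B - A) * b := mul_nonneg (he'.trans hslack) hb.le
  gcongr

lemma sum_le_mul_of_subset {ι : Type*} [DecidableEq ι] {N T : Finset ι} {a b : ι → ℝ}
    {b0 x : ℝ} (hT : T ⊆ N) (hab : ∀ k ∈ N, x * b k ≤ a k)
    (hN : ∑ k ∈ N, a k = x * (b0 + ∑ k ∈ N, b k)) :
    ∑ k ∈ T, a k ≤ x * (b0 + ∑ k ∈ T, b k) := by
  have hrest : x * ∑ k ∈ N \ T, b k ≤ ∑ k ∈ N \ T, a k := by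
    rw [mul_sum]
    exact sum_le_sum fun k hk => hab k (mem_sdiff.mp hk).1
  rw [← sum_sdiff hT (f := a), ← sum_sdiff hT (f := b)] at hN
  linarith

theorem stmt_19_general {ι : Type*} [DecidableEq ι] (N : Finset ι) (hN : N.Nonempty)
    (a b : ι → ℝ) (b0 : ℝ)
    (hb0 : 0 < b0) (hb : ∀ i ∈ N, 0 < b i)
    (h : Finset ι → ℝ)
    (hdef : ∀ S : Finset ι, h S = (∑ i ∈ S, a i) / (b0 + ∑ i ∈ S, b i))
    (hmin : h N ≤ N.inf' hN (fun i => a i / b i)) :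
    ∀ S : Finset ι, S ⊆ N → ∀ i ∈ N, ∀ j ∈ N, i ∉ S → j ∉ S → i ≠ j →
      h (insert i (insert j S)) - h (insert j S) ≤ h (insert i S) - h S := by
  intro S hS i hi j hj hiS hjS hij
  have hab : ∀ k ∈ N, h N * b k ≤ a k := fun k hk =>
    (le_div_iff₀ (hb k hk)).mp (hmin.trans (inf'_le _ hk))
  have hBpos : ∀ T ⊆ N, 0 < b0 + ∑ k ∈ T, b k := fun T hT =>
    add_pos_of_pos_of_nonneg hb0 (sum_nonneg fun k hk => (hb k (hT hk)).le)
  have hsumN : ∑ k ∈ N, a k = h N * (b0 + ∑ k ∈ N, b k) := by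
    rw [hdef N, div_mul_cancel₀ _ (hBpos N subset_rfl).ne']
  have hins : ∀ T, ∀ k ∉ T, h (insert k T) = (∑ l ∈ T, a l + a k) / (b0 + ∑ l ∈ T, b l + b k) := by
    intro T k hk
    rw [hdef, sum_insert hk, sum_insert hk, add_comm (a k), add_comm (b k), add_assoc]
  have hiS' : i ∉ insert j S := by simp [hij, hiS]
  have hjS' : insert j S ⊆ N := insert_subset hj hS
  rw [hins _ _ hiS', hins _ _ hiS, hdef (insert j S), hdef S]
  refine add_div_add_sub_div_antitone (hb i hi) (hBpos S hS) ?_ (hab i hi)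
    (sum_le_mul_of_subset hjS' hab hsumN) ?_ <;>
  · simp only [sum_insert hjS]
    linarith [hb j hj, hab j hj]

theorem stmt_19 {ι : Type*} [DecidableEq ι] (N : Finset ι) (hN : N.Nonempty)
    (a b : ι → ℝ) (b0 : ℝ)
    (hb0 : 0 < b0) (ha : ∀ i ∈ N, 0 ≤ a i) (hb : ∀ i ∈ N, 0 < b i)
    (h : Finset ι → ℝ)
    (hdef : ∀ S : Finset ι, h S = (∑ i ∈ S, a i) / (b0 + ∑ i ∈ S, b i))
    (hmin : h N ≤ N.inf' hN (fun i => a i / b i)) :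
    ∀ S : Finset ι, S ⊆ N → ∀ i ∈ N, ∀ j ∈ N, i ∉ S → j ∉ S → i ≠ j →
      h (insert i (insert j S)) - h (insert j S) ≤ h (insert i S) - h S :=
  stmt_19_general N hN a b b0 hb0 hb h hdef hmin
end
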